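/- Let f : ℝ^n → ℝ be continuously differentiable and let g : [-1,1]^n → ℝ be the harmonic extension of the restriction of f to {-1,1}^n, i.e. g(y) = ∫ f dμ_y where μ_y is the unique product probability measure on {-1,1}^n with mean y. Then there exists a universal constant κ > 0 such that sup_{y ∈ [-1,1]^n} ( f(y) - g(y) ) ≤ κ · b(V), where V = ∇f([-1,1]^n) and b(V) = E[ sup_{ξ∈V} ⟨ξ,ε⟩ ] with ε uniformly distributed on {-1,1}^n. -/

import Mathlib

open MeasureTheory Real Set ENNReal
open scoped Classical

noncomputable def cubeUniform (n : ℕ) : Measure (Fin n → ℝ) :=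
  Measure.pi fun _ =>
    ((2 : ℝ≥0∞)⁻¹ • Measure.dirac (-1 : ℝ) + (2 : ℝ≥0∞)⁻¹ • Measure.dirac (1 : ℝ))

noncomputable def logLaplaceCube (n : ℕ) (ξ : Fin n → ℝ) : ℝ :=
  Real.log (∫ x, Real.exp (∑ i, ξ i * x i) ∂cubeUniform n)

def solidCube (n : ℕ) : Set (Fin n → ℝ) := {y | ∀ i, y i ∈ Set.Icc (-1 : ℝ) 1}

noncomputable def prodCube (n : ℕ) (y : Fin n → ℝ) : Measure (Fin n → ℝ) :=
  Measure.pi fun i =>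
    (ENNReal.ofReal ((1 - y i) / 2) • Measure.dirac (-1 : ℝ) +
      ENNReal.ofReal ((1 + y i) / 2) • Measure.dirac (1 : ℝ))

/-! ### Auxiliary lemmas -/

def ptc {n : ℕ} (s : Fin n → Bool) : Fin n → ℝ := fun i => if s i then 1 else -1

theorem pi_dirac {n : ℕ} (a b : Fin n → ℝ≥0∞) (ha : ∀ i, a i ≠ ∞) (hb : ∀ i, b i ≠ ∞) :
    Measure.pi (fun i => a i • Measure.dirac (-1 : ℝ) + b i • Measure.dirac (1 : ℝ)) =
      ∑ s : Fin n → Bool, (∏ i, if s i then b i else a i) • Measure.dirac (ptc s) := by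
  haveI : ∀ i, IsFiniteMeasure ((a i • Measure.dirac (-1 : ℝ) + b i • Measure.dirac (1 : ℝ))) := by
    intro i
    constructor
    simp [Measure.add_apply, Measure.smul_apply, lt_top_iff_ne_top,
      ENNReal.add_ne_top, ENNReal.mul_ne_top, ha i, hb i, measure_ne_top]
  apply Measure.pi_eq
  intro S hS
  rw [Measure.finset_sum_apply]
  have hmeas : MeasurableSet (Set.univ.pi S) := MeasurableSet.univ_pi hS
  have h1 : ∀ s : Fin n → Bool, ((∏ i, if s i then b i else a i) • Measure.dirac (ptc s)) (Set.univ.pi S)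
      = ∏ i, ((if s i then b i else a i) * (if ptc s i ∈ S i then 1 else 0)) := by
    intro s
    rw [Measure.smul_apply, smul_eq_mul, Measure.dirac_apply' _ hmeas]
    rw [Finset.prod_mul_distrib]
    congr 1
    rw [Fintype.prod_boole]
    simp only [Set.indicator, Set.mem_pi, Set.mem_univ, forall_true_left, Pi.one_apply]
    split <;> simp_all
  simp_rw [h1, ptc]
  refine Eq.trans (Fintype.prod_sum fun i (c : Bool) => (if c then b i else a i) * (if (if c then (1:ℝ) else -1) ∈ S i then 1 else 0)).symm ?_
  · congr 1
    funext i
    rw [Fintype.sum_bool]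
    simp only [if_true, if_false]
    rw [Measure.add_apply, Measure.smul_apply, Measure.smul_apply,
      Measure.dirac_apply' _ (hS i), Measure.dirac_apply' _ (hS i)]
    simp [Set.indicator, mul_comm]
    ring

theorem integrable_dirac' {α : Type*} [MeasurableSpace α] [MeasurableSingletonClass α]
    (f : α → ℝ) (x : α) : Integrable f (Measure.dirac x) := by
  constructor
  · refine (aestronglyMeasurable_const (b := f x)).congr ?_
    simp [Filter.EventuallyEq, ae_dirac_eq]
  · rw [HasFiniteIntegral, lintegral_dirac]
    exact ENNReal.coe_lt_top

theorem integrable_smul_dirac {α : Type*} [MeasurableSpace α] [MeasurableSingletonClass α]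
    (f : α → ℝ) (x : α) (c : ℝ≥0∞) (hc : c ≠ ∞) : Integrable f (c • Measure.dirac x) := by
  rcases eq_or_ne c 0 with rfl | h
  · simp only [zero_smul]
    exact integrable_zero_measure
  · exact (integrable_smul_measure h hc).2 (integrable_dirac' f x)

theorem integral_pi_dirac {n : ℕ} (a b : Fin n → ℝ≥0∞) (ha : ∀ i, a i ≠ ∞) (hb : ∀ i, b i ≠ ∞)
    (f : (Fin n → ℝ) → ℝ) :
    ∫ x, f x ∂ Measure.pi (fun i => a i • Measure.dirac (-1 : ℝ) + b i • Measure.dirac (1 : ℝ)) =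
      ∑ s : Fin n → Bool, (∏ i, if s i then b i else a i).toReal * f (ptc s) := by
  rw [pi_dirac a b ha hb]
  rw [integral_finset_sum_measure (fun s _ => integrable_smul_dirac f (ptc s) _
    (by
      apply ENNReal.prod_ne_top
      intro i _
      split <;> [exact hb i; exact ha i]))]
  refine Finset.sum_congr rfl fun s _ => ?_
  rw [integral_smul_measure, integral_dirac, smul_eq_mul]

theorem clm_expand {n : ℕ} (L : (Fin n → ℝ) →L[ℝ] ℝ) (u : Fin n → ℝ) :
    L u = ∑ i, L (Pi.single i 1) * u i := by
  conv_lhs => rw [← Finset.univ_sum_single u]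
  rw [map_sum]
  refine Finset.sum_congr rfl fun i _ => ?_
  have : (Pi.single i (u i) : Fin n → ℝ) = (u i) • (Pi.single i (1:ℝ) : Fin n → ℝ) := by
    ext j
    rcases eq_or_ne j i with rfl | hji
    · simp
    · simp [Pi.single_eq_of_ne hji]
  rw [this, _root_.map_smul, smul_eq_mul, mul_comm]

/-- one-sided mean value inequality -/
theorem mvt_le {φ : ℝ → ℝ} {d : ℝ → ℝ} (hd : ∀ t, HasDerivAt φ (d t) t)
    {B : ℝ} (hB : ∀ t ∈ Set.Icc (0:ℝ) 1, d t ≤ B) : φ 1 - φ 0 ≤ B := by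
  set ψ : ℝ → ℝ := fun t => B * t - φ t with hψ
  have hdψ : ∀ t, HasDerivAt ψ (B - d t) t := fun t => by
    exact (((hasDerivAt_id' t).const_mul B).sub (hd t)).congr_deriv (by ring)
  have hmono : MonotoneOn ψ (Set.Icc (0:ℝ) 1) := by
    apply monotoneOn_of_deriv_nonneg (convex_Icc 0 1)
    · exact fun t _ => ((hdψ t).continuousAt).continuousWithinAt
    · exact fun t _ => ((hdψ t).differentiableAt).differentiableWithinAt
    · intro t ht
      rw [(hdψ t).deriv]
      have : t ∈ Set.Icc (0:ℝ) 1 := interior_subset ht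
      linarith [hB t this]
  have := hmono (Set.mem_Icc.2 ⟨le_refl 0, zero_le_one⟩) (Set.mem_Icc.2 ⟨zero_le_one, le_refl 1⟩) zero_le_one
  simp only [hψ] at this
  linarith

theorem sum_prod_bool {n : ℕ} (p : Fin n → Bool → ℝ) :
    ∑ s : Fin n → Bool, ∏ i, p i (s i) = ∏ i, (p i true + p i false) := by
  rw [← Fintype.prod_sum]
  refine Finset.prod_congr rfl fun i _ => ?_
  rw [Fintype.sum_bool]

theorem sum_prod_bool_pm {n : ℕ} (p : Fin n → Bool → ℝ) (hp : ∀ i, p i true + p i false = 1)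
    (j : Fin n) :
    ∑ s : Fin n → Bool, (∏ i, p i (s i)) * (if s j then (1:ℝ) else -1) =
      p j true - p j false := by
  have key : ∀ s : Fin n → Bool, (∏ i, p i (s i)) * (if s j then (1:ℝ) else -1) =
      ∏ i, (p i (s i) * (if i = j then (if s i then (1:ℝ) else -1) else 1)) := by
    intro s
    rw [Finset.prod_mul_distrib]
    congr 1
    rw [Finset.prod_ite_eq' Finset.univ j (fun i => if s i then (1:ℝ) else -1)]
    simp
  simp_rw [key]
  rw [sum_prod_bool (fun i b => p i b * (if i = j then (if b then (1:ℝ) else -1) else 1))]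
  have : ∀ i, (p i true * (if i = j then (1:ℝ) else 1) + p i false * (if i = j then (-1:ℝ) else 1))
      = if i = j then p j true - p j false else 1 := by
    intro i
    rcases eq_or_ne i j with rfl | hij
    · simp; ring
    · simp [hij, hp i]
  simp only [show (if (true:Bool) = true then (1:ℝ) else -1) = 1 from rfl,
    show (if (false:Bool) = true then (1:ℝ) else -1) = -1 from rfl, if_true]
  rw [Finset.prod_congr rfl fun i _ => this i]
  rw [Finset.prod_ite_eq' Finset.univ j (fun _ => p j true - p j false)]
  simp

theorem main_aux {n : ℕ} (f : (Fin n → ℝ) → ℝ) (hf : ContDiff ℝ 1 f) :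
    (⨆ y : solidCube n, (f y - ∫ x, f x ∂prodCube n y)) ≤
      2 * ∫ x, (⨆ y : solidCube n, ∑ i, fderiv ℝ f y (Pi.single i 1) * x i) ∂cubeUniform n := by
  haveI hne : Nonempty (solidCube n) := ⟨⟨fun _ => 0, fun i => ⟨by norm_num, by norm_num⟩⟩⟩
  have btrue : ((true:Bool) = true) = True := by simp
  have bfalse : ((false:Bool) = true) = False := by simp
  set F : (Fin n → ℝ) → ℝ :=
    fun x => ⨆ y : solidCube n, ∑ i, fderiv ℝ f y (Pi.single i 1) * x i with hFdef
  have hcont : Continuous fun z : Fin n → ℝ => fderiv ℝ f z := hf.continuous_fderiv one_ne_zero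
  have hbdd : ∀ u : Fin n → ℝ, BddAbove (Set.range fun z : solidCube n =>
      ∑ i, fderiv ℝ f (z : Fin n → ℝ) (Pi.single i 1) * u i) := by
    intro u
    have hc : Continuous fun z : Fin n → ℝ => ∑ i, fderiv ℝ f z (Pi.single i 1) * u i := by
      apply continuous_finset_sum
      intro i _
      exact (hcont.clm_apply continuous_const).mul continuous_const
    have hK : IsCompact (solidCube n) := by
      have : solidCube n = Set.univ.pi fun _ : Fin n => Set.Icc (-1:ℝ) 1 := by
        ext z
        simp only [solidCube, Set.mem_setOf_eq, Set.mem_pi, Set.mem_univ, forall_true_left]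
      rw [this]
      exact isCompact_univ_pi fun _ => isCompact_Icc
    have := (hK.image_of_continuousOn hc.continuousOn).bddAbove
    rwa [Set.image_eq_range] at this
  have hle : ∀ (u : Fin n → ℝ) (z : solidCube n),
      ∑ i, fderiv ℝ f (z : Fin n → ℝ) (Pi.single i 1) * u i ≤ F u :=
    fun u z => le_ciSup (hbdd u) z
  have hsc : ∀ s : Fin n → Bool, ptc s ∈ solidCube n := by
    intro s i
    dsimp [ptc]
    split <;> constructor <;> norm_num
  have hdiff : Differentiable ℝ f := hf.differentiable one_ne_zero
  -- one-sided mean value bound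
  have hA : ∀ x y : Fin n → ℝ, x ∈ solidCube n → y ∈ solidCube n →
      f y - f x ≤ F (y - x) := by
    intro x y hx hy
    have hline : ∀ t : ℝ, HasDerivAt (fun t : ℝ => x + t • (y - x)) (y - x) t := by
      intro t
      simpa using ((hasDerivAt_id t).smul_const (y - x)).const_add x
    have hder : ∀ t : ℝ, HasDerivAt (fun t => f (x + t • (y - x)))
        (fderiv ℝ f (x + t • (y - x)) (y - x)) t := fun t =>
      (hdiff _).hasFDerivAt.comp_hasDerivAt t (hline t)
    have hmem : ∀ t ∈ Set.Icc (0:ℝ) 1, x + t • (y - x) ∈ solidCube n := by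
      intro t ht i
      have hxi := hx i
      have hyi := hy i
      simp only [Set.mem_Icc] at hxi hyi ht ⊢
      simp only [Pi.add_apply, Pi.smul_apply, Pi.sub_apply, smul_eq_mul]
      constructor <;> nlinarith [hxi.1, hxi.2, hyi.1, hyi.2, ht.1, ht.2]
    have hdb : ∀ t ∈ Set.Icc (0:ℝ) 1, fderiv ℝ f (x + t • (y - x)) (y - x) ≤ F (y - x) := by
      intro t ht
      rw [clm_expand]
      exact hle (y - x) ⟨_, hmem t ht⟩
    have := mvt_le hder hdb
    simpa using this
  -- compute the cubeUniform integral
  have hcu : ∫ x, F x ∂cubeUniform n = ∑ ε : Fin n → Bool, (2⁻¹:ℝ)^n * F (ptc ε) := by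
    rw [show cubeUniform n = Measure.pi (fun _ : Fin n =>
      (2:ℝ≥0∞)⁻¹ • Measure.dirac (-1:ℝ) + (2:ℝ≥0∞)⁻¹ • Measure.dirac (1:ℝ)) from rfl]
    rw [integral_pi_dirac _ _ (fun i => by simp) (fun i => by simp) F]
    refine Finset.sum_congr rfl fun ε _ => ?_
    congr 1
    simp only [ite_self, Finset.prod_const, Finset.card_univ, Fintype.card_fin]
    rw [ENNReal.toReal_pow]
    congr 1
    simp [ENNReal.toReal_inv]
  rw [hcu]
  refine ciSup_le ?_
  rintro ⟨y, hy⟩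
  show f y - ∫ x, f x ∂prodCube n y ≤ _
  -- weights
  set W : (Fin n → Bool) → ℝ :=
    fun s => ∏ i, (1 + y i * (if s i then (1:ℝ) else -1))/2 with hWdef
  set Q : (Fin n → Bool) → (Fin n → Bool) → ℝ :=
    fun s ε => ∏ i, (2 + (if ε i then (1:ℝ) else -1) * (y i - (if s i then (1:ℝ) else -1)))/4 with hQdef
  have hprod : ∫ x, f x ∂prodCube n y = ∑ s : Fin n → Bool, W s * f (ptc s) := by
    rw [show prodCube n y = Measure.pi (fun i =>
      ENNReal.ofReal ((1 - y i)/2) • Measure.dirac (-1:ℝ) +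
      ENNReal.ofReal ((1 + y i)/2) • Measure.dirac (1:ℝ)) from rfl]
    rw [integral_pi_dirac _ _ (fun i => ofReal_ne_top) (fun i => ofReal_ne_top) f]
    refine Finset.sum_congr rfl fun s _ => ?_
    congr 1
    rw [ENNReal.toReal_prod]
    simp only [hWdef]
    refine Finset.prod_congr rfl fun i _ => ?_
    rcases hy i with ⟨h1, h2⟩
    cases hsb : s i
    · rw [if_neg (by simp), if_neg (by simp),
        ENNReal.toReal_ofReal (by linarith : (0:ℝ) ≤ (1 - y i)/2)]
      ring
    · rw [if_pos rfl, if_pos rfl,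
        ENNReal.toReal_ofReal (by linarith : (0:ℝ) ≤ (1 + y i)/2)]
      ring
  rw [hprod]
  have hW1 : ∑ s : Fin n → Bool, W s = 1 := by
    rw [hWdef]
    rw [sum_prod_bool (fun i b => (1 + y i * (if b then (1:ℝ) else -1))/2)]
    rw [Finset.prod_congr rfl (fun i _ => show (1 + y i * (if true then (1:ℝ) else -1))/2 +
        (1 + y i * (if false then (1:ℝ) else -1))/2 = 1 by
          simp only [btrue, bfalse, if_true, if_false]; ring)]
    simp
  have hW0 : ∀ s, 0 ≤ W s := by
    intro s
    apply Finset.prod_nonneg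
    intro i _
    rcases hy i with ⟨h1, h2⟩
    split <;> nlinarith
  have hQ0 : ∀ s ε, 0 ≤ Q s ε := by
    intro s ε
    apply Finset.prod_nonneg
    intro i _
    rcases hy i with ⟨h1, h2⟩
    split <;> split <;> nlinarith
  -- main per-s bound
  have step3 : ∀ s : Fin n → Bool, F (y - ptc s) ≤ 2 * ∑ ε : Fin n → Bool, Q s ε * F (ptc ε) := by
    intro s
    refine ciSup_le fun z => ?_
    have hq1 : ∀ i, (2 + (if true then (1:ℝ) else -1) * (y i - (if s i then (1:ℝ) else -1)))/4 +
        (2 + (if false then (1:ℝ) else -1) * (y i - (if s i then (1:ℝ) else -1)))/4 = 1 := by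
      intro i
      simp only [btrue, bfalse, if_true, if_false]
      ring
    have ident : ∑ i, fderiv ℝ f (z : Fin n → ℝ) (Pi.single i 1) * (y - ptc s) i
        = ∑ ε : Fin n → Bool, Q s ε * (2 * ∑ i, fderiv ℝ f (z : Fin n → ℝ) (Pi.single i 1) * ptc ε i) := by
      have e1 : ∀ ε : Fin n → Bool, Q s ε * (2 * ∑ i, fderiv ℝ f (z : Fin n → ℝ) (Pi.single i 1) * ptc ε i)
          = ∑ j, (2 * fderiv ℝ f (z : Fin n → ℝ) (Pi.single j 1)) * (Q s ε * (if ε j then (1:ℝ) else -1)) := by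
        intro ε
        rw [Finset.mul_sum, Finset.mul_sum]
        refine Finset.sum_congr rfl fun j _ => ?_
        dsimp [ptc]
        ring
      have e2 : ∀ j, ∑ ε : Fin n → Bool, Q s ε * (if ε j then (1:ℝ) else -1) = (y j - ptc s j)/2 := by
        intro j
        rw [show (∑ ε : Fin n → Bool, Q s ε * (if ε j then (1:ℝ) else -1)) =
          ∑ ε : Fin n → Bool, (∏ i, (2 + (if ε i then (1:ℝ) else -1) * (y i - (if s i then (1:ℝ) else -1)))/4) * (if ε j then (1:ℝ) else -1) from rfl]
        rw [sum_prod_bool_pm (fun i b => (2 + (if b then (1:ℝ) else -1) * (y i - (if s i then (1:ℝ) else -1)))/4) hq1 j]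
        dsimp [ptc]
        ring
      refine Eq.symm ?_
      calc ∑ ε : Fin n → Bool, Q s ε * (2 * ∑ i, fderiv ℝ f (z : Fin n → ℝ) (Pi.single i 1) * ptc ε i)
          = ∑ ε : Fin n → Bool, ∑ j, (2 * fderiv ℝ f (z : Fin n → ℝ) (Pi.single j 1)) * (Q s ε * (if ε j then (1:ℝ) else -1)) :=
            Finset.sum_congr rfl fun ε _ => e1 ε
        _ = ∑ j, ∑ ε : Fin n → Bool, (2 * fderiv ℝ f (z : Fin n → ℝ) (Pi.single j 1)) * (Q s ε * (if ε j then (1:ℝ) else -1)) :=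
            Finset.sum_comm
        _ = ∑ j, (2 * fderiv ℝ f (z : Fin n → ℝ) (Pi.single j 1)) * ∑ ε : Fin n → Bool, Q s ε * (if ε j then (1:ℝ) else -1) :=
            Finset.sum_congr rfl fun j _ => (Finset.mul_sum _ _ _).symm
        _ = ∑ j, (2 * fderiv ℝ f (z : Fin n → ℝ) (Pi.single j 1)) * ((y j - ptc s j)/2) :=
            Finset.sum_congr rfl fun j _ => by rw [e2 j]
        _ = ∑ i, fderiv ℝ f (z : Fin n → ℝ) (Pi.single i 1) * (y - ptc s) i := by
            refine Finset.sum_congr rfl fun j _ => ?_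
            simp only [Pi.sub_apply]
            ring
    calc ∑ i, fderiv ℝ f (z : Fin n → ℝ) (Pi.single i 1) * (y - ptc s) i
        = ∑ ε : Fin n → Bool, Q s ε * (2 * ∑ i, fderiv ℝ f (z : Fin n → ℝ) (Pi.single i 1) * ptc ε i) := ident
      _ ≤ ∑ ε : Fin n → Bool, Q s ε * (2 * F (ptc ε)) := by
          refine Finset.sum_le_sum fun ε _ => ?_
          refine mul_le_mul_of_nonneg_left ?_ (hQ0 s ε)
          have := hle (ptc ε) z
          linarith
      _ = 2 * ∑ ε : Fin n → Bool, Q s ε * F (ptc ε) := by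
          rw [Finset.mul_sum]
          refine Finset.sum_congr rfl fun ε _ => by ring
  have hWQ : ∀ ε : Fin n → Bool, ∑ s : Fin n → Bool, W s * Q s ε = (2⁻¹:ℝ)^n := by
    intro ε
    have e3 : ∀ s : Fin n → Bool, W s * Q s ε =
        ∏ i, (((1 + y i * (if s i then (1:ℝ) else -1))/2) *
          ((2 + (if ε i then (1:ℝ) else -1) * (y i - (if s i then (1:ℝ) else -1)))/4)) := by
      intro s
      rw [← Finset.prod_mul_distrib]
    rw [Finset.sum_congr rfl fun s _ => e3 s]
    rw [sum_prod_bool (fun i b => (((1 + y i * (if b then (1:ℝ) else -1))/2) *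
      ((2 + (if ε i then (1:ℝ) else -1) * (y i - (if b then (1:ℝ) else -1)))/4)))]
    rw [Finset.prod_congr rfl (fun i _ => show
      ((1 + y i * (if true then (1:ℝ) else -1))/2) * ((2 + (if ε i then (1:ℝ) else -1) * (y i - (if true then (1:ℝ) else -1)))/4) +
      ((1 + y i * (if false then (1:ℝ) else -1))/2) * ((2 + (if ε i then (1:ℝ) else -1) * (y i - (if false then (1:ℝ) else -1)))/4)
        = 2⁻¹ by simp only [btrue, bfalse, if_true, if_false]; ring)]
    simp [Finset.prod_const]
  calc f y - ∑ s : Fin n → Bool, W s * f (ptc s)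
      = ∑ s : Fin n → Bool, W s * (f y - f (ptc s)) := by
        simp_rw [mul_sub, Finset.sum_sub_distrib, ← Finset.sum_mul, hW1, one_mul]
    _ ≤ ∑ s : Fin n → Bool, W s * F (y - ptc s) :=
        Finset.sum_le_sum fun s _ => mul_le_mul_of_nonneg_left (hA (ptc s) y (hsc s) hy) (hW0 s)
    _ ≤ ∑ s : Fin n → Bool, W s * (2 * ∑ ε : Fin n → Bool, Q s ε * F (ptc ε)) :=
        Finset.sum_le_sum fun s _ => mul_le_mul_of_nonneg_left (step3 s) (hW0 s)
    _ = ∑ s : Fin n → Bool, ∑ ε : Fin n → Bool, 2 * ((W s * Q s ε) * F (ptc ε)) := by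
        refine Finset.sum_congr rfl fun s _ => ?_
        rw [Finset.mul_sum, Finset.mul_sum]
        refine Finset.sum_congr rfl fun ε _ => by ring
    _ = ∑ ε : Fin n → Bool, ∑ s : Fin n → Bool, 2 * ((W s * Q s ε) * F (ptc ε)) :=
        Finset.sum_comm
    _ = 2 * ∑ ε : Fin n → Bool, (2⁻¹:ℝ)^n * F (ptc ε) := by
        rw [Finset.mul_sum]
        refine Finset.sum_congr rfl fun ε _ => ?_
        rw [show ∑ s : Fin n → Bool, 2 * ((W s * Q s ε) * F (ptc ε)) =
          2 * ((∑ s : Fin n → Bool, W s * Q s ε) * F (ptc ε)) by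
            rw [Finset.sum_mul, Finset.mul_sum]]
        rw [hWQ ε]

/-- **Comparison of a function with the harmonic extension of its restriction to the
hypercube.** There is a universal constant `κ > 0` such that for every `C¹` function
`f : ℝⁿ → ℝ`, with `g(y) = ∫ f dμ_y` the harmonic extension of `f|_{{-1,1}ⁿ}`,
`sup_{y ∈ [-1,1]ⁿ} (f(y) - g(y)) ≤ κ b(V)` where `V = ∇f([-1,1]ⁿ)` and
`b(V) = E[sup_{ξ ∈ V} ⟨ξ,ε⟩]` with `ε` uniform on `{-1,1}ⁿ`. -/
theorem harmonic_extension_compare :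
    ∃ κ : ℝ, 0 < κ ∧ ∀ (n : ℕ) (f : (Fin n → ℝ) → ℝ), ContDiff ℝ 1 f →
      (⨆ y : solidCube n, (f y - ∫ x, f x ∂prodCube n y)) ≤
        κ * ∫ x, (⨆ y : solidCube n, ∑ i, fderiv ℝ f y (Pi.single i 1) * x i)
          ∂cubeUniform n := by
  refine ⟨2, by norm_num, fun n f hf => main_aux f hf⟩
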